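/- For every n ≥ 0 and every weak composition μ of n, the map sending a colored permutation (σ,c) of content μ to the chain c(σ,c) is a bijection from the set 𝔖_μ of colored permutations of content μ onto the set of maximal chains of the interval [0̂, ([n],μ)] in the weighted boolean algebra B_n^w. -/

import Mathlib

/-!
A weak composition (finitely supported function {1,2,…} → ℕ) is modeled by the multiset
of colors in Multiset ℕ in which color j appears μ(j) times; the correspondence preserves
the componentwise order (Multiset.le), sizes (card), and sends e_r to {r}.  Chains are
recorded as lists of poset elements listed from bottom to top; a maximal chain of the
closed interval [x,y] is a chain from x to y in which every consecutive pair is a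
covering relation (equivalently, a chain of [x,y] maximal under inclusion).
-/

/-- The weighted boolean algebra `B_n^w`. -/
@[ext] structure WSub (n : ℕ) where
  carrier : Finset (Fin n)
  wt : Multiset ℕ
  card_eq : Multiset.card wt = carrier.card

instance {n : ℕ} : PartialOrder (WSub n) where
  le p q := p.carrier ⊆ q.carrier ∧ p.wt ≤ q.wt
  le_refl p := ⟨subset_rfl, le_rfl⟩
  le_trans a b c hab hbc := ⟨hab.1.trans hbc.1, hab.2.trans hbc.2⟩
  le_antisymm a b hab hba :=
    WSub.ext (Finset.Subset.antisymm hab.1 hba.1) (le_antisymm hab.2 hba.2)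

/-- The rank-`i` element `p_i = ({σ(1),…,σ(i)}, e_{c(σ(1))} + ⋯ + e_{c(σ(i))})` of the
chain associated with the colored permutation `(σ,c)`. -/
def chainElt {n : ℕ} (σ : Equiv.Perm (Fin n)) (c : Fin n → ℕ) (i : ℕ) : WSub n :=
  ⟨(Finset.univ.filter (fun p : Fin n => (p : ℕ) < i)).image σ,
   (Finset.univ.filter (fun p : Fin n => (p : ℕ) < i)).val.map (fun p => c (σ p)),
   by rw [Multiset.card_map, Finset.card_image_of_injective _ σ.injective]; rfl⟩

/-- The maximal chain `c(σ,c) : 0̂ = p_0 ⋖ p_1 ⋖ ⋯ ⋖ p_n = ([n],μ)` associated with a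
colored permutation `(σ,c)`, as a list from bottom to top. -/
def chainOf {n : ℕ} (σ : Equiv.Perm (Fin n)) (c : Fin n → ℕ) : List (WSub n) :=
  (List.range (n + 1)).map (chainElt σ c)

/-- `c` is a maximal chain of the closed interval `[x,y]`: it runs from `x` to `y` and
each consecutive pair is a covering relation. -/
def IsMaxChain' {α : Type*} [PartialOrder α] (x y : α) (c : List α) : Prop :=
  c.Chain' (· ⋖ ·) ∧ c.head? = some x ∧ c.getLast? = some y

/-- The content of a coloring `c` of `[n]`: the multiset of its colors. -/
def content {n : ℕ} (c : Fin n → ℕ) : Multiset ℕ := Finset.univ.val.map c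

/-!
In `B_n^w`, `x ⋖ y` exactly when `y` arises from `x` by adding one point `a` to the set and one
color `r` to the weight: the weight always has as many elements as the set, so two comparable
elements with the same set are equal. Hence a maximal chain from `0̂` to `([n], μ)` has `n`
steps, the `i`-th adding a point `σ(i)` with a color `c(σ(i))`; the points are distinct because
the sets increase, and reading off `(σ, c)` step by step inverts `(σ, c) ↦ c(σ, c)`.
-/

namespace WSub

variable {n : ℕ}

theorem eq_of_le_of_carrier_eq {x y : WSub n} (h : x ≤ y) (hc : x.carrier = y.carrier) :
    x = y :=
  WSub.ext hc (Multiset.eq_of_le_of_card_le h.2 (by rw [x.card_eq, y.card_eq, hc]))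

theorem carrier_ssubset_of_lt {x y : WSub n} (h : x < y) : x.carrier ⊂ y.carrier :=
  Finset.ssubset_iff_subset_ne.2 ⟨h.le.1, fun hc => h.ne (eq_of_le_of_carrier_eq h.le hc)⟩

theorem covBy_of_eq_insert {x y : WSub n} {a : Fin n} (ha : a ∉ x.carrier) {r : ℕ}
    (hc : y.carrier = insert a x.carrier) (hw : y.wt = r ::ₘ x.wt) : x ⋖ y := by
  have hxy : x < y := by
    refine lt_of_le_of_ne ⟨hc ▸ Finset.subset_insert _ _, hw ▸ Multiset.le_cons_self _ _⟩ ?_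
    rintro rfl
    exact ha (hc ▸ Finset.mem_insert_self a x.carrier)
  refine ⟨hxy, fun z hxz hzy => ?_⟩
  have hxz' := Finset.card_lt_card (carrier_ssubset_of_lt hxz)
  have hzy' := Finset.card_lt_card (carrier_ssubset_of_lt hzy)
  rw [hc, Finset.card_insert_of_notMem ha] at hzy'
  omega

theorem exists_eq_insert_of_covBy {x y : WSub n} (h : x ⋖ y) :
    ∃ a ∉ x.carrier, ∃ r, y.carrier = insert a x.carrier ∧ y.wt = r ::ₘ x.wt := by
  have hxy := carrier_ssubset_of_lt h.lt
  obtain ⟨a, hay, hax⟩ := Finset.exists_of_ssubset hxy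
  obtain ⟨r, hr⟩ : ∃ r, r ∈ y.wt - x.wt := by
    rw [← Multiset.card_pos_iff_exists_mem, Multiset.card_sub h.le.2, x.card_eq, y.card_eq]
    exact Nat.sub_pos_of_lt (Finset.card_lt_card hxy)
  let z : WSub n := ⟨insert a x.carrier, r ::ₘ x.wt, by
    rw [Multiset.card_cons, x.card_eq, Finset.card_insert_of_notMem hax]⟩
  have hzy : z ≤ y := by
    refine ⟨Finset.insert_subset hay h.le.1, ?_⟩
    calc r ::ₘ x.wt = {r} + x.wt := (Multiset.singleton_add _ _).symm
      _ ≤ (y.wt - x.wt) + x.wt := add_le_add_left (Multiset.singleton_le.2 hr) _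
      _ = y.wt := tsub_add_cancel_of_le h.le.2
  obtain hzx | rfl := h.eq_or_eq ⟨Finset.subset_insert _ _, Multiset.le_cons_self _ _⟩ hzy
  · exact absurd (hzx ▸ Finset.mem_insert_self a x.carrier) hax
  · exact ⟨a, hax, r, rfl, rfl⟩

theorem card_carrier_of_covBy {x y : WSub n} (h : x ⋖ y) :
    y.carrier.card = x.carrier.card + 1 := by
  obtain ⟨a, ha, -, hc, -⟩ := exists_eq_insert_of_covBy h
  rw [hc, Finset.card_insert_of_notMem ha]

theorem card_carrier_getElem_of_isChain {L : List (WSub n)} (hL : L.IsChain (· ⋖ ·))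
    (i : ℕ) (hi : i < L.length) : L[i].carrier.card = L[0].carrier.card + i := by
  induction i with
  | zero => rfl
  | succ i ih => rw [card_carrier_of_covBy (hL.getElem i hi), ih (by omega), add_assoc]

end WSub

section ChainOfColoredPermutation

variable {n : ℕ} (σ : Equiv.Perm (Fin n)) (c : Fin n → ℕ)

theorem chainElt_zero : chainElt σ c 0 = ⟨∅, 0, by simp⟩ := by
  ext <;> simp [chainElt]

theorem filter_val_lt_succ (i : Fin n) :
    Finset.univ.filter (fun p : Fin n => (p : ℕ) < i + 1) =
      insert i (Finset.univ.filter (fun p : Fin n => (p : ℕ) < i)) := by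
  ext p
  simp only [Finset.mem_filter, Finset.mem_insert, Finset.mem_univ, true_and, Fin.ext_iff]
  omega

theorem chainElt_succ_carrier (i : Fin n) :
    (chainElt σ c (i + 1)).carrier = insert (σ i) (chainElt σ c i).carrier := by
  simp only [chainElt, filter_val_lt_succ, Finset.image_insert]

theorem chainElt_succ_wt (i : Fin n) :
    (chainElt σ c (i + 1)).wt = c (σ i) ::ₘ (chainElt σ c i).wt := by
  simp only [chainElt, filter_val_lt_succ]
  rw [Finset.insert_val_of_notMem (by simp), Multiset.map_cons]

theorem apply_notMem_chainElt_carrier (i : Fin n) : σ i ∉ (chainElt σ c i).carrier := by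
  simp [chainElt]

theorem chainElt_covBy (i : Fin n) : chainElt σ c i ⋖ chainElt σ c (i + 1) :=
  WSub.covBy_of_eq_insert (apply_notMem_chainElt_carrier σ c i)
    (chainElt_succ_carrier σ c i) (chainElt_succ_wt σ c i)

theorem content_comp_perm : content (c ∘ σ) = content c := by
  rw [content, ← Multiset.map_map, Multiset.map_univ_val_equiv, content]

theorem chainElt_self : chainElt σ c n = ⟨Finset.univ, content c, by simp [content]⟩ := by
  ext1
  · simp [chainElt]
  · simp only [chainElt, Fin.is_lt, Finset.filter_true]
    exact content_comp_perm σ c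

theorem length_chainOf : (chainOf σ c).length = n + 1 := by simp [chainOf]

theorem getElem_chainOf {i : ℕ} (h : i < (chainOf σ c).length) :
    (chainOf σ c)[i] = chainElt σ c i := by
  simp [chainOf]

theorem isMaxChain'_chainOf :
    IsMaxChain' (⟨∅, 0, by simp⟩ : WSub n)
      (⟨Finset.univ, content c, by simp [content]⟩ : WSub n) (chainOf σ c) := by
  refine ⟨?_, ?_, ?_⟩
  · show List.IsChain _ _
    rw [List.isChain_iff_getElem]
    intro i hi
    rw [length_chainOf] at hi
    simpa [getElem_chainOf] using chainElt_covBy σ c ⟨i, by omega⟩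
  · simp [chainOf, List.range_succ_eq_map, chainElt_zero]
  · simp [chainOf, List.range_succ, chainElt_self]

theorem chainOf_injective :
    Function.Injective fun w : Equiv.Perm (Fin n) × (Fin n → ℕ) => chainOf w.1 w.2 := by
  rintro ⟨σ, c⟩ ⟨σ', c'⟩ h
  have hElt (i : ℕ) (hi : i ≤ n) : chainElt σ c i = chainElt σ' c' i := by
    have := congrArg (·[i]?) h
    simpa [chainOf, Nat.lt_succ_of_le hi] using this
  have hstep (i : Fin n) : σ i = σ' i ∧ c (σ i) = c' (σ' i) := by
    have hc := congrArg WSub.carrier (hElt (i + 1) i.isLt)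
    have hw := congrArg WSub.wt (hElt (i + 1) i.isLt)
    rw [chainElt_succ_carrier, chainElt_succ_carrier, ← hElt i i.isLt.le] at hc
    rw [chainElt_succ_wt, chainElt_succ_wt, ← hElt i i.isLt.le] at hw
    exact ⟨(Finset.insert_inj (apply_notMem_chainElt_carrier σ c i)).1 hc,
      (Multiset.cons_inj_left _).1 hw⟩
  have hσ : σ = σ' := Equiv.ext fun i => (hstep i).1
  subst hσ
  refine Prod.ext rfl (funext fun x => ?_)
  simpa using (hstep (σ.symm x)).2

end ChainOfColoredPermutation

section ColoredPermutationOfMaximalChain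

variable {n : ℕ}

theorem exists_chainElt_eq (g : Fin (n + 1) → WSub n) (h0 : g 0 = ⟨∅, 0, by simp⟩)
    (hcov : ∀ i : Fin n, g i.castSucc ⋖ g i.succ) :
    ∃ (σ : Equiv.Perm (Fin n)) (c : Fin n → ℕ), ∀ i : Fin (n + 1), chainElt σ c i = g i := by
  choose f hf r hcar hwt using fun i => WSub.exists_eq_insert_of_covBy (hcov i)
  have hmono : Monotone g := (Fin.strictMono_iff_lt_succ.2 fun i => (hcov i).lt).monotone
  have hf_inj : Function.Injective f := by
    refine Function.Injective.of_lt_imp_ne fun i j hij hfij => hf j ?_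
    have hfi : f i ∈ (g i.succ).carrier := hcar i ▸ Finset.mem_insert_self _ _
    exact hfij ▸ (hmono (Fin.succ_le_castSucc_iff.2 hij)).1 hfi
  let σ := Equiv.ofBijective f hf_inj.bijective_of_finite
  refine ⟨σ, r ∘ σ.symm, Fin.induction ?_ fun i hi => ?_⟩
  · simpa [h0] using chainElt_zero σ (r ∘ σ.symm)
  · ext1
    · rw [Fin.val_succ, chainElt_succ_carrier, ← Fin.val_castSucc, hi, hcar]
      rfl
    · rw [Fin.val_succ, chainElt_succ_wt, ← Fin.val_castSucc, hi, hwt]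
      simp [σ]

theorem exists_chainOf_eq (μ : Multiset ℕ) (hμ : Multiset.card μ = n) (L : List (WSub n))
    (hL : IsMaxChain' (⟨∅, 0, by simp⟩ : WSub n) ⟨Finset.univ, μ, by simp [hμ]⟩ L) :
    ∃ (σ : Equiv.Perm (Fin n)) (c : Fin n → ℕ), content c = μ ∧ chainOf σ c = L := by
  obtain ⟨hchain, hhead, hlast⟩ := hL
  have hchain : L.IsChain (· ⋖ ·) := hchain
  have hpos : 0 < L.length := List.length_pos_iff.2 (by rintro rfl; simp at hhead)
  rw [List.head?_eq_getElem?, List.getElem?_eq_getElem hpos, Option.some_inj] at hhead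
  rw [List.getLast?_eq_getElem?, List.getElem?_eq_getElem (by omega), Option.some_inj] at hlast
  have hlen : L.length = n + 1 := by
    have hcard := WSub.card_carrier_getElem_of_isChain hchain (L.length - 1) (by omega)
    simp only [hhead, hlast, Finset.card_univ, Fintype.card_fin, Finset.card_empty] at hcard
    omega
  obtain ⟨σ, c, hσc⟩ := exists_chainElt_eq (fun i => L[i.val]) (by simpa using hhead)
    fun i => hchain.getElem i (by omega)
  have hL : chainOf σ c = L := List.ext_getElem (by rw [length_chainOf, hlen]) fun i h₁ h₂ => by
    rw [getElem_chainOf]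
    exact hσc ⟨i, by rwa [length_chainOf] at h₁⟩
  refine ⟨σ, c, ?_, hL⟩
  have htop := hσc (Fin.last n)
  simp only [hlen, Nat.add_sub_cancel] at hlast
  simp only [Fin.val_last, chainElt_self, hlast] at htop
  exact congrArg WSub.wt htop

end ColoredPermutationOfMaximalChain

theorem colored_permutations_biject_with_maximal_chains (n : ℕ) (μ : Multiset ℕ)
    (hμ : Multiset.card μ = n) :
    Set.BijOn (fun w : Equiv.Perm (Fin n) × (Fin n → ℕ) => chainOf w.1 w.2)
      {w | content w.2 = μ}
      {c | IsMaxChain' (⟨∅, 0, by simp⟩ : WSub n)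
             (⟨Finset.univ, μ, by simp [hμ]⟩ : WSub n) c} := by
  refine ⟨?_, chainOf_injective.injOn, ?_⟩
  · rintro ⟨σ, c⟩ rfl
    exact isMaxChain'_chainOf σ c
  · intro L hL
    obtain ⟨σ, c, hc, rfl⟩ := exists_chainOf_eq μ hμ L hL
    exact ⟨(σ, c), hc, rfl⟩
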